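/- Let 0 < β₁ < β₂ < β₄ < 2 and b, c > 0. Define g(ω) = β₄ ω^{β₄−β₁} sin(β₄π/2) − b β₂ ω^{β₂−β₁} sin(β₂π/2) − c β₁ sin(β₁π/2) for ω > 0. Then g has exactly one zero in (0, ∞). -/

import Mathlib

/-!
Dividing by `ω ^ (β₂ - β₁)` turns `g` into `A ω ^ (β₄ - β₂) - K - C ω ^ (β₁ - β₂)` with
`A, C > 0`. Since `β₄ - β₂ > 0 > β₁ - β₂`, both `A ω ^ (β₄ - β₂)` and `-C ω ^ (β₁ - β₂)` increase,
so this function is strictly increasing on `(0, ∞)`; it tends to `-∞` at `0⁺` and to `+∞` at `∞`.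
The intermediate value theorem and injectivity give exactly one zero.
-/

open Real Filter Set Topology

lemma sin_mul_pi_div_two_pos {β : ℝ} (h0 : 0 < β) (h2 : β < 2) : 0 < sin (β * π / 2) :=
  sin_pos_of_pos_of_lt_pi (by positivity) (by nlinarith [pi_pos])

theorem existsUnique_mem_Ioi_eq_of_strictMonoOn {f : ℝ → ℝ} {a : ℝ} (y : ℝ)
    (hcont : ContinuousOn f (Ioi a)) (hmono : StrictMonoOn f (Ioi a))
    (hbot : Tendsto f (𝓝[>] a) atBot) (htop : Tendsto f atTop atTop) :
    ∃! x, x ∈ Ioi a ∧ f x = y := by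
  obtain ⟨u, hfu, hu⟩ := ((hbot.eventually (eventually_le_atBot y)).and self_mem_nhdsWithin).exists
  obtain ⟨v, hfv, hv⟩ := ((htop.eventually (eventually_ge_atTop y)).and (Ioi_mem_atTop a)).exists
  obtain ⟨x, hx, rfl⟩ := isPreconnected_Ioi.intermediate_value hu hv hcont ⟨hfu, hfv⟩
  exact ⟨x, ⟨hx, rfl⟩, fun z ⟨hz, hfz⟩ => hmono.injOn hz hx hfz⟩

theorem existsUnique_pos_mul_rpow_sub_sub_mul_rpow_eq_zero {A C p q : ℝ} (K : ℝ)
    (hA : 0 < A) (hC : 0 < C) (hp : 0 < p) (hq : q < 0) :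
    ∃! x, x ∈ Ioi 0 ∧ A * x ^ p - K - C * x ^ q = 0 := by
  refine existsUnique_mem_Ioi_eq_of_strictMonoOn 0 ?_ ?_ ?_ ?_
  · exact ((continuousOn_const.mul (continuousOn_id.rpow_const fun x _ => Or.inr hp.le)).sub
      continuousOn_const).sub (continuousOn_const.mul
        (continuousOn_id.rpow_const fun x hx => Or.inl hx.ne'))
  · intro x hx y hy hxy
    have hp_lt := rpow_lt_rpow hx.le hxy hp
    have hq_lt := rpow_lt_rpow_of_neg hx hxy hq
    dsimp only
    nlinarith
  · have hxp : Tendsto (fun x : ℝ => x ^ p) (𝓝[>] 0) (𝓝 0) := by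
      simpa [zero_rpow hp.ne'] using
        (continuousAt_rpow_const 0 p (Or.inr hp.le)).tendsto.mono_left nhdsWithin_le_nhds
    have hxq : Tendsto (fun x : ℝ => -(C * x ^ q)) (𝓝[>] 0) atBot :=
      tendsto_neg_atBot_iff.mpr ((tendsto_rpow_neg_nhdsGT_zero hq).const_mul_atTop hC)
    exact (((hxp.const_mul A).sub_const K).add_atBot hxq).congr fun x => by ring
  · have hxq : Tendsto (fun x : ℝ => x ^ q) atTop (𝓝 0) := by
      simpa using tendsto_rpow_neg_atTop (neg_pos.mpr hq)
    exact (((hxq.const_mul C).const_sub (-K)).add_atTop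
      ((tendsto_rpow_atTop hp).const_mul_atTop hA)).congr fun x => by ring

theorem stmt_13_general (β₁ β₂ β₄ : ℝ) (h1 : 0 < β₁) (h12 : β₁ < β₂) (h24 : β₂ < β₄)
    (h4 : β₄ < 2) (b c : ℝ) (hc : 0 < c)
    (g : ℝ → ℝ)
    (hg : ∀ ω : ℝ, g ω =
        β₄ * ω ^ (β₄ - β₁) * Real.sin (β₄ * π / 2)
          - b * β₂ * ω ^ (β₂ - β₁) * Real.sin (β₂ * π / 2)
          - c * β₁ * Real.sin (β₁ * π / 2)) :
    ∃! ω : ℝ, ω ∈ Set.Ioi (0:ℝ) ∧ g ω = 0 := by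
  set A := β₄ * sin (β₄ * π / 2)
  set K := b * β₂ * sin (β₂ * π / 2)
  set C := c * β₁ * sin (β₁ * π / 2)
  have hA : 0 < A := mul_pos (by linarith) (sin_mul_pi_div_two_pos (by linarith) h4)
  have hC : 0 < C := mul_pos (mul_pos hc h1) (sin_mul_pi_div_two_pos h1 (by linarith))
  have hfactor : ∀ x > 0,
      g x = x ^ (β₂ - β₁) * (A * x ^ (β₄ - β₂) - K - C * x ^ (β₁ - β₂)) := by
    intro x hx
    have hp : x ^ (β₂ - β₁) * x ^ (β₄ - β₂) = x ^ (β₄ - β₁) := by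
      rw [← rpow_add hx]; ring_nf
    have hq : x ^ (β₂ - β₁) * x ^ (β₁ - β₂) = 1 := by
      rw [← rpow_add hx]; simp
    linear_combination hg x - A * hp + C * hq
  refine (existsUnique_congr fun x => ?_).mpr
    (existsUnique_pos_mul_rpow_sub_sub_mul_rpow_eq_zero K hA hC (sub_pos.mpr h24)
      (sub_neg.mpr h12))
  refine and_congr_right fun (hx : 0 < x) => ?_
  rw [hfactor x hx, mul_eq_zero, or_iff_right (rpow_pos_of_pos hx _).ne']

theorem stmt_13 (β₁ β₂ β₄ : ℝ) (h1 : 0 < β₁) (h12 : β₁ < β₂) (h24 : β₂ < β₄)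
    (h4 : β₄ < 2) (b c : ℝ) (hb : 0 < b) (hc : 0 < c)
    (g : ℝ → ℝ)
    (hg : ∀ ω : ℝ, g ω =
        β₄ * ω ^ (β₄ - β₁) * Real.sin (β₄ * π / 2)
          - b * β₂ * ω ^ (β₂ - β₁) * Real.sin (β₂ * π / 2)
          - c * β₁ * Real.sin (β₁ * π / 2)) :
    ∃! ω : ℝ, ω ∈ Set.Ioi (0:ℝ) ∧ g ω = 0 :=
  stmt_13_general β₁ β₂ β₄ h1 h12 h24 h4 b c hc g hg
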